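/- In a J-category, the definition of Wsecat(p) for a morphism p : E → B via an F-factorization B →τ F ↠ 0 of the zero morphism does not depend on the choice of F-factorization: if B →τ F ↠ 0 and B →τ' F' ↠ 0 are two F-factorizations, then Wsecat(τ∘p) = Wsecat(τ'∘p). -/

import Mathlib

open CategoryTheory CategoryTheory.Limits ZeroObject

universe v u v' u'

variable (C : Type u) [Category.{v} C] [HasZeroObject C] [HasZeroMorphisms C]

/-- A category satisfying axioms (J1)-(J4) of Doeraene's J-categories:
a pointed category with fibrations, cofibrations and weak equivalences. -/
structure PreJCat where
  fib : MorphismProperty C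
  cofib : MorphismProperty C
  weq : MorphismProperty C
  /-- (J1) isomorphisms are trivial cofibrations -/
  iso_triv_cofib : ∀ {X Y : C} (f : X ⟶ Y), IsIso f → cofib f ∧ weq f
  /-- (J1) isomorphisms are trivial fibrations -/
  iso_triv_fib : ∀ {X Y : C} (f : X ⟶ Y), IsIso f → fib f ∧ weq f
  fib_comp : ∀ {X Y Z : C} {f : X ⟶ Y} {g : Y ⟶ Z}, fib f → fib g → fib (f ≫ g)
  cofib_comp : ∀ {X Y Z : C} {f : X ⟶ Y} {g : Y ⟶ Z}, cofib f → cofib g → cofib (f ≫ g)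
  /-- (J1) two-out-of-three for weak equivalences -/
  weq_comp : ∀ {X Y Z : C} {f : X ⟶ Y} {g : Y ⟶ Z}, weq f → weq g → weq (f ≫ g)
  weq_of_comp_left : ∀ {X Y Z : C} {f : X ⟶ Y} {g : Y ⟶ Z}, weq g → weq (f ≫ g) → weq f
  weq_of_comp_right : ∀ {X Y Z : C} {f : X ⟶ Y} {g : Y ⟶ Z}, weq f → weq (f ≫ g) → weq g
  /-- (J2) pullbacks of fibrations exist, and the base extension is a fibration -/
  pb_exists : ∀ {E B B' : C} (p : E ⟶ B) (f : B' ⟶ B), fib p →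
    ∃ (P : C) (fb : P ⟶ E) (pb : P ⟶ B'), IsPullback fb pb p f ∧ fib pb
  /-- (J2) base extensions of weak equivalences along fibrations are weak equivalences -/
  pb_weq : ∀ {E B B' P : C} {p : E ⟶ B} {f : B' ⟶ B} {fb : P ⟶ E} {pb : P ⟶ B'},
    fib p → IsPullback fb pb p f → (weq f → weq fb) ∧ (weq p → weq pb)
  /-- (J2) dual: pushouts of cofibrations exist -/
  po_exists : ∀ {A X Y : C} (i : A ⟶ X) (g : A ⟶ Y), cofib i →
    ∃ (Q : C) (inl : X ⟶ Q) (inr : Y ⟶ Q), IsPushout i g inl inr ∧ cofib inr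
  po_weq : ∀ {A X Y Q : C} {i : A ⟶ X} {g : A ⟶ Y} {inl : X ⟶ Q} {inr : Y ⟶ Q},
    cofib i → IsPushout i g inl inr → (weq g → weq inl) ∧ (weq i → weq inr)
  /-- (J3) F-factorizations exist -/
  F_fac : ∀ {X Y : C} (f : X ⟶ Y), ∃ (Z : C) (τ : X ⟶ Z) (q : Z ⟶ Y),
    weq τ ∧ fib q ∧ τ ≫ q = f
  /-- (J3) C-factorizations exist -/
  C_fac : ∀ {X Y : C} (f : X ⟶ Y), ∃ (Z : C) (i : X ⟶ Z) (σ : Z ⟶ Y),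
    cofib i ∧ weq σ ∧ i ≫ σ = f
  /-- (J4) cofibrant replacements exist -/
  cof_replace : ∀ X : C, ∃ (Xb : C) (q : Xb ⟶ X), fib q ∧ weq q ∧
    (∀ {E : C} (p : E ⟶ Xb), fib p → weq p → ∃ s : Xb ⟶ E, s ≫ p = 𝟙 Xb)

variable {C}

namespace PreJCat

/-- An object is a cofibrant model if every trivial fibration onto it admits a section. -/
def CofModel (P : PreJCat C) (X : C) : Prop :=
  ∀ {E : C} (p : E ⟶ X), P.fib p → P.weq p → ∃ s : X ⟶ E, s ≫ p = 𝟙 X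

/-- An object is e-fibrant if the morphism to the zero object is a fibration. -/
def EFibrant (P : PreJCat C) (X : C) : Prop := P.fib (0 : X ⟶ 0)

/-- `f` admits a weak lifting along `g` (all objects being cofibrant models). -/
def WeakLifting (P : PreJCat C) {A B Cc : C} (f : A ⟶ B) (g : Cc ⟶ B) : Prop :=
  ∃ (E : C) (τ : Cc ⟶ E) (q : E ⟶ B), P.weq τ ∧ P.fib q ∧ τ ≫ q = g ∧
    ∃ s : A ⟶ E, s ≫ q = f

/-- `g` admits a weak section. -/
def HasWeakSection (P : PreJCat C) {E B : C} (g : E ⟶ B) : Prop :=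
  P.WeakLifting (𝟙 B) g

/-- `j : J ⟶ B` is a join morphism of `f : A ⟶ B` and `g : Cc ⟶ B`: built from an
F-factorization of `g`, a pullback, a C-factorization and a pushout. -/
def IsJoin (P : PreJCat C) {A Cc B J : C} (f : A ⟶ B) (g : Cc ⟶ B) (j : J ⟶ B) : Prop :=
  ∃ (E : C) (τ : Cc ⟶ E) (q : E ⟶ B), P.weq τ ∧ P.fib q ∧ τ ≫ q = g ∧
  ∃ (E' Z : C) (fbar : E' ⟶ E) (pbar : E' ⟶ A) (i : E' ⟶ Z) (σ : Z ⟶ E)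
    (a : A ⟶ J) (bz : Z ⟶ J),
    IsPullback fbar pbar q f ∧ P.cofib i ∧ P.weq σ ∧ i ≫ σ = fbar ∧
    IsPushout pbar i a bz ∧ a ≫ j = f ∧ bz ≫ j = σ ≫ q

/-- `IsIterJoin P p n h` : `h` is an `n`-th iterated join morphism `*ⁿ_B E ⟶ B` of `p`. -/
inductive IsIterJoin (P : PreJCat C) {E B : C} (p : E ⟶ B) : ℕ → ∀ {X : C}, (X ⟶ B) → Prop
  | zero : IsIterJoin P p 0 p
  | succ {n : ℕ} {X Y : C} {h : X ⟶ B} {h' : Y ⟶ B} :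
      IsIterJoin P p n h → P.IsJoin h p h' → IsIterJoin P p (n + 1) h'

/-- The Ganea-type sectional category of a morphism. -/
noncomputable def Gsecat (P : PreJCat C) {E B : C} (p : E ⟶ B) : ℕ∞ :=
  sInf {n : ℕ∞ | ∃ m : ℕ, n = (m : ℕ∞) ∧
    ∃ (X : C) (h : X ⟶ B), P.IsIterJoin p m h ∧ P.HasWeakSection h}

end PreJCat

/-- `p1, p2` exhibit `Pd` as a binary product of `X` and `Y`. -/
def IsBinProd {X Y Pd : C} (p1 : Pd ⟶ X) (p2 : Pd ⟶ Y) : Prop :=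
  Nonempty (IsLimit (BinaryFan.mk p1 p2))

namespace PreJCat

/-- `IsFatWedge P p n j Δ` : `j : Tⁿ(p) ⟶ B^{n+1}` is an `n`-th fat wedge morphism of `p`
together with the diagonal `Δ : B ⟶ B^{n+1}`. -/
inductive IsFatWedge (P : PreJCat C) {E B : C} (p : E ⟶ B) :
    ℕ → ∀ {T Pw : C}, (T ⟶ Pw) → (B ⟶ Pw) → Prop
  | zero : IsFatWedge P p 0 p (𝟙 B)
  | succ {n : ℕ} {T Pn : C} {j : T ⟶ Pn} {Δ : B ⟶ Pn}
      (hprev : IsFatWedge P p n j Δ)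
      {Pn1 : C} {pr1 : Pn1 ⟶ Pn} {pr2 : Pn1 ⟶ B} (hP : IsBinProd pr1 pr2)
      {TB : C} {q1 : TB ⟶ T} {q2 : TB ⟶ B} (hTB : IsBinProd q1 q2)
      {PE : C} {r1 : PE ⟶ Pn} {r2 : PE ⟶ E} (hPE : IsBinProd r1 r2)
      {jB : TB ⟶ Pn1} (hjB : jB ≫ pr1 = q1 ≫ j ∧ jB ≫ pr2 = q2)
      {pP : PE ⟶ Pn1} (hpP : pP ≫ pr1 = r1 ∧ pP ≫ pr2 = r2 ≫ p)
      {Tn1 : C} {j' : Tn1 ⟶ Pn1} (hjoin : P.IsJoin jB pP j')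
      {Δ' : B ⟶ Pn1} (hΔ : Δ' ≫ pr1 = Δ ∧ Δ' ≫ pr2 = 𝟙 B) :
      IsFatWedge P p (n + 1) j' Δ'

/-- The Whitehead-type sectional category of a morphism with e-fibrant codomain. -/
noncomputable def WsecatE (P : PreJCat C) {E B : C} (p : E ⟶ B) : ℕ∞ :=
  sInf {n : ℕ∞ | ∃ m : ℕ, n = (m : ℕ∞) ∧
    ∃ (T Pw : C) (j : T ⟶ Pw) (Δ : B ⟶ Pw), P.IsFatWedge p m j Δ ∧ P.WeakLifting Δ j}

/-- The Whitehead-type sectional category of an arbitrary morphism, via e-fibrant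
replacements of the codomain. -/
noncomputable def Wsecat (P : PreJCat C) {E B : C} (p : E ⟶ B) : ℕ∞ :=
  ⨅ (F : C) (τ : B ⟶ F) (_ : P.weq τ ∧ P.EFibrant F), P.WsecatE (p ≫ τ)

/-- A commutative square is a homotopy pullback. -/
def IsHPB (P : PreJCat C) {D A Cc B : C} (f' : D ⟶ Cc) (g' : D ⟶ A)
    (g : Cc ⟶ B) (f : A ⟶ B) : Prop :=
  f' ≫ g = g' ≫ f ∧ ∃ (E : C) (τ : Cc ⟶ E) (q : E ⟶ B), P.weq τ ∧ P.fib q ∧ τ ≫ q = g ∧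
    ∃ (Pt : C) (pr1 : Pt ⟶ E) (pr2 : Pt ⟶ A), IsPullback pr1 pr2 q f ∧
      ∃ w : D ⟶ Pt, P.weq w ∧ w ≫ pr1 = f' ≫ τ ∧ w ≫ pr2 = g'

/-- A commutative square is a homotopy pushout. -/
def IsHPO (P : PreJCat C) {A B Cc D : C} (f : A ⟶ B) (g : A ⟶ Cc)
    (i' : B ⟶ D) (j' : Cc ⟶ D) : Prop :=
  f ≫ i' = g ≫ j' ∧ ∃ (Z : C) (i : A ⟶ Z) (σ : Z ⟶ B), P.cofib i ∧ P.weq σ ∧ i ≫ σ = f ∧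
    ∃ (Q : C) (inl : Z ⟶ Q) (inr : Cc ⟶ Q), IsPushout i g inl inr ∧
      ∃ w : Q ⟶ D, P.weq w ∧ inl ≫ w = σ ≫ i' ∧ inr ≫ w = j'

/-- `A-A'-B'-B` is a weak pullback over `b : B ⟶ B'` (all objects cofibrant models). -/
def IsWeakPullback (P : PreJCat C) {A B A' B' : C}
    (f : A ⟶ B) (f' : A' ⟶ B') (b : B ⟶ B') : Prop :=
  ∃ (X : C) (τ : A' ⟶ X) (q : X ⟶ B'), P.weq τ ∧ P.fib q ∧ τ ≫ q = f' ∧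
    ∃ x : A ⟶ X, P.IsHPB x f q b

/-- `g : G ⟶ B` is an `n`-th Ganea map of `B`: the `n`-th iterated join of `0 ⟶ B`. -/
def IsGaneaMap (P : PreJCat C) (B : C) (n : ℕ) {G : C} (g : G ⟶ B) : Prop :=
  P.IsIterJoin (0 : (0 : C) ⟶ B) n g

/-- The Lusternik-Schnirelmann category of an object. -/
noncomputable def catObj (P : PreJCat C) (B : C) : ℕ∞ :=
  sInf {n : ℕ∞ | ∃ m : ℕ, n = (m : ℕ∞) ∧
    ∃ (G : C) (g : G ⟶ B), P.IsGaneaMap B m g ∧ P.HasWeakSection g}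

/-- The Lusternik-Schnirelmann category of a morphism `b : B ⟶ B'`:
least `n` such that `b` admits a weak lifting along the `n`-th Ganea map of `B'`. -/
noncomputable def catMor (P : PreJCat C) {B B' : C} (b : B ⟶ B') : ℕ∞ :=
  sInf {n : ℕ∞ | ∃ m : ℕ, n = (m : ℕ∞) ∧
    ∃ (G : C) (g : G ⟶ B'), P.IsGaneaMap B' m g ∧ P.WeakLifting b g}

/-- One step of a zigzag: a weak equivalence of morphisms in the arrow category. -/
def MorWeqStep (P : PreJCat C) (u v : Arrow C) : Prop :=
  ∃ h : u ⟶ v, P.weq h.left ∧ P.weq h.right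

/-- Two morphisms are weakly equivalent: joined by a finite zigzag of weak
equivalences of morphisms. -/
def WeaklyEquivMor (P : PreJCat C) (u v : Arrow C) : Prop :=
  Relation.EqvGen P.MorWeqStep u v

def ObjWeqStep (P : PreJCat C) (X Y : C) : Prop := ∃ f : X ⟶ Y, P.weq f

/-- Two objects are weakly equivalent: joined by a finite zigzag of weak equivalences. -/
def WeaklyEquivObj (P : PreJCat C) (X Y : C) : Prop :=
  Relation.EqvGen P.ObjWeqStep X Y

/-- The abstract topological complexity of an e-fibrant object:
the sectional category of the diagonal `B ⟶ B × B`. -/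
noncomputable def TCE (P : PreJCat C) (B : C) : ℕ∞ :=
  ⨅ (Pd : C) (p1 : Pd ⟶ B) (p2 : Pd ⟶ B) (_ : IsBinProd p1 p2)
    (Δ : B ⟶ Pd) (_ : Δ ≫ p1 = 𝟙 B ∧ Δ ≫ p2 = 𝟙 B), P.Gsecat Δ

/-- The abstract topological complexity of an arbitrary object, via e-fibrant
replacements. -/
noncomputable def TC (P : PreJCat C) (B : C) : ℕ∞ :=
  ⨅ (F : C) (τ : B ⟶ F) (_ : P.weq τ ∧ P.EFibrant F), P.TCE F

end PreJCat

variable (C)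

/-- A J-category: (J1)-(J4) together with the cube axiom (J5). -/
structure JCat extends PreJCat C where
  /-- (J5) the cube axiom: in a commutative cube whose bottom face is a homotopy
  pushout and whose vertical faces are homotopy pullbacks, the top face is a
  homotopy pushout. -/
  cube : ∀ {X00 X01 X10 X11 Y00 Y01 Y10 Y11 : C}
    {tf : X00 ⟶ X01} {tg : X00 ⟶ X10} {ti : X01 ⟶ X11} {tj : X10 ⟶ X11}
    {bf : Y00 ⟶ Y01} {bg : Y00 ⟶ Y10} {bi : Y01 ⟶ Y11} {bj : Y10 ⟶ Y11}
    {v00 : X00 ⟶ Y00} {v01 : X01 ⟶ Y01} {v10 : X10 ⟶ Y10} {v11 : X11 ⟶ Y11},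
    tf ≫ ti = tg ≫ tj →
    toPreJCat.IsHPO bf bg bi bj →
    toPreJCat.IsHPB tf v00 v01 bf →
    toPreJCat.IsHPB tg v00 v10 bg →
    toPreJCat.IsHPB ti v01 v11 bi →
    toPreJCat.IsHPB tj v10 v11 bj →
    toPreJCat.IsHPO tf tg ti tj

variable {C}

/-- A modelization functor: preserves weak equivalences, homotopy pullbacks and
homotopy pushouts. -/
structure ModelizationFunctor {D : Type u'} [Category.{v'} D] [HasZeroObject D]
    [HasZeroMorphisms D] (P : PreJCat C) (Q : PreJCat D) where
  F : C ⥤ D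
  map_weq : ∀ {X Y : C} (f : X ⟶ Y), P.weq f → Q.weq (F.map f)
  map_hpb : ∀ {Dd A Cc B : C} {f' : Dd ⟶ Cc} {g' : Dd ⟶ A} {g : Cc ⟶ B} {f : A ⟶ B},
    P.IsHPB f' g' g f → Q.IsHPB (F.map f') (F.map g') (F.map g) (F.map f)
  map_hpo : ∀ {A B Cc Dd : C} {f : A ⟶ B} {g : A ⟶ Cc} {i' : B ⟶ Dd} {j' : Cc ⟶ Dd},
    P.IsHPO f g i' j' → Q.IsHPO (F.map f) (F.map g) (F.map i') (F.map j')

/-!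
Two F-factorizations `B → F ↠ 0` and `B → F' ↠ 0` are dominated by a third one
`B → G ↠ 0`, through trivial fibrations `θ : G → F` and `θ' : G → F'`. It therefore suffices
to show `WsecatE (h ≫ θ) = WsecatE h` for a trivial fibration `θ` between e-fibrant objects.

The fat wedges of `h` and `h ≫ θ` are compared level by level: the power `Θ = θⁿ⁺¹` of `θ`
is a trivial fibration between their bases, and by the cube axiom the pullback along `Θ` of
a fat wedge of `h ≫ θ` is, up to a zigzag of weak equivalences over the base, a fat wedge of
`h`. Weak liftings of the diagonals are insensitive to both operations because all objects
are cofibrant models. That joins are invariant under such zigzags rests on a gluing lemma for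
homotopy pushouts, which follows from the axiom that pushouts along cofibrations preserve
weak equivalences.
-/

section Homotopy

-- `C` is redeclared without the zero-object instances, first needed for `IsBinProd`.
variable {C : Type u} [Category.{v} C]

section PullbackAlong

variable {B' B X Y Xh Yh : C} {Θ : B' ⟶ B} {x : X ⟶ B} {y : Y ⟶ B} {xh : Xh ⟶ B'}
  {ρX : Xh ⟶ X} {yh : Yh ⟶ B'} {ρY : Yh ⟶ Y}

lemma isPullback_of_pullback_map (sqX : IsPullback xh ρX Θ x) (sqY : IsPullback yh ρY Θ y)
    {d : X ⟶ Y} (hd : d ≫ y = x) {dh : Xh ⟶ Yh} (h₁ : dh ≫ yh = xh) (h₂ : dh ≫ ρY = ρX ≫ d) :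
    IsPullback dh ρX ρY d := by
  refine (IsPullback.of_bot ?_ h₂.symm sqY.flip).flip
  rw [h₁, hd]
  exact sqX.flip

lemma exists_pullback_map (sqX : IsPullback xh ρX Θ x) (sqY : IsPullback yh ρY Θ y)
    (d : X ⟶ Y) (hd : d ≫ y = x) : ∃ dh : Xh ⟶ Yh, dh ≫ yh = xh ∧ IsPullback dh ρX ρY d := by
  have w : xh ≫ Θ = (ρX ≫ d) ≫ y := by rw [Category.assoc, hd, sqX.w]
  exact ⟨sqY.lift xh (ρX ≫ d) w, sqY.lift_fst _ _ _,
    isPullback_of_pullback_map sqX sqY hd (sqY.lift_fst _ _ _) (sqY.lift_snd _ _ _)⟩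

lemma isPullback_pullback_of_isPullback {W Wh : C} {u : W ⟶ X} {v : W ⟶ Y}
    (base : IsPullback u v x y) (sqX : IsPullback xh ρX Θ x) (sqY : IsPullback yh ρY Θ y)
    {wh : Wh ⟶ B'} {ρW : Wh ⟶ W} (sqW : IsPullback wh ρW Θ (u ≫ x)) {uh : Wh ⟶ Xh}
    {vh : Wh ⟶ Yh} (hu₁ : uh ≫ xh = wh) (hu₂ : uh ≫ ρX = ρW ≫ u) (hv₁ : vh ≫ yh = wh)
    (hv₂ : vh ≫ ρY = ρW ≫ v) : IsPullback uh vh xh yh := by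
  have faceV := isPullback_of_pullback_map sqW sqY base.w.symm hv₁ hv₂
  have outer : IsPullback (uh ≫ ρX) vh x (yh ≫ Θ) := by
    rw [hu₂, sqY.w]
    exact faceV.flip.paste_horiz base
  exact outer.of_right (by rw [hu₁, hv₁]) sqX.flip

end PullbackAlong

namespace PreJCat

variable (P : PreJCat C)

lemma weq_of_isIso {X Y : C} (f : X ⟶ Y) [IsIso f] : P.weq f :=
  (P.iso_triv_fib f inferInstance).2

lemma fib_of_isIso {X Y : C} (f : X ⟶ Y) [IsIso f] : P.fib f :=
  (P.iso_triv_fib f inferInstance).1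

lemma cofib_of_isIso {X Y : C} (f : X ⟶ Y) [IsIso f] : P.cofib f :=
  (P.iso_triv_cofib f inferInstance).1

def OverWeqStep {B : C} (u v : Over B) : Prop :=
  ∃ e : u ⟶ v, P.weq e.left

def WeaklyEquivOver {B : C} (u v : Over B) : Prop :=
  Relation.EqvGen P.OverWeqStep u v

def IsHPushoutOver {W X Y B J : C} (s : W ⟶ X) (t : W ⟶ Y) (x : X ⟶ B) (y : Y ⟶ B)
    (j : J ⟶ B) : Prop :=
  ∃ (Z : C) (i : W ⟶ Z) (σ : Z ⟶ X) (a : Y ⟶ J) (b : Z ⟶ J),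
    P.cofib i ∧ P.weq σ ∧ i ≫ σ = s ∧ IsPushout t i a b ∧ a ≫ j = y ∧ b ≫ j = σ ≫ x

variable {P}

lemma fib_of_isPullback {E B B' Q : C} {p : E ⟶ B} {f : B' ⟶ B} {fb : Q ⟶ E} {pb : Q ⟶ B'}
    (h : IsPullback fb pb p f) (hp : P.fib p) : P.fib pb := by
  obtain ⟨Q', fb', pb', h', hpb'⟩ := P.pb_exists p f hp
  rw [← IsPullback.isoIsPullback_hom_snd _ _ h h']
  exact P.fib_comp (P.fib_of_isIso _) hpb'

lemma cofib_of_isPushout {A X Y Q : C} {i : A ⟶ X} {g : A ⟶ Y} {inl : X ⟶ Q} {inr : Y ⟶ Q}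
    (h : IsPushout i g inl inr) (hi : P.cofib i) : P.cofib inr := by
  obtain ⟨Q', inl', inr', h', hinr'⟩ := P.po_exists i g hi
  rw [← IsPushout.inr_isoIsPushout_hom _ _ h' h]
  exact P.cofib_comp hinr' (P.cofib_of_isIso _)

namespace WeaklyEquivOver

lemma of_weq {B T T' : C} {j : T ⟶ B} {j' : T' ⟶ B} (e : T ⟶ T') (he : P.weq e)
    (hej : e ≫ j' = j) : P.WeaklyEquivOver (Over.mk j) (Over.mk j') :=
  Relation.EqvGen.rel _ _ ⟨Over.homMk e hej, he⟩

lemma symm {B : C} {u v : Over B} (h : P.WeaklyEquivOver u v) : P.WeaklyEquivOver v u :=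
  Relation.EqvGen.symm _ _ h

lemma trans {B : C} {u v w : Over B} (h : P.WeaklyEquivOver u v)
    (h' : P.WeaklyEquivOver v w) : P.WeaklyEquivOver u w :=
  Relation.EqvGen.trans _ _ _ h h'

end WeaklyEquivOver

lemma exists_common_refinement {T E₁ E₂ B : C} {τ₁ : T ⟶ E₁} {q₁ : E₁ ⟶ B} {τ₂ : T ⟶ E₂}
    {q₂ : E₂ ⟶ B} (hτ₁ : P.weq τ₁) (hq₁ : P.fib q₁) (hτ₂ : P.weq τ₂) (hq₂ : P.fib q₂)
    (h : τ₁ ≫ q₁ = τ₂ ≫ q₂) :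
    ∃ (M : C) (τ : T ⟶ M) (ρ₁ : M ⟶ E₁) (ρ₂ : M ⟶ E₂), P.weq τ ∧
      P.fib ρ₁ ∧ P.weq ρ₁ ∧ P.fib ρ₂ ∧ P.weq ρ₂ ∧
      τ ≫ ρ₁ = τ₁ ∧ τ ≫ ρ₂ = τ₂ ∧ ρ₁ ≫ q₁ = ρ₂ ≫ q₂ := by
  obtain ⟨X, x₂, x₁, sq, hx₁⟩ := P.pb_exists q₂ q₁ hq₂
  obtain ⟨M, τ, π, hτ, hπ, hfac⟩ := P.F_fac (sq.lift τ₂ τ₁ h.symm)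
  have e₁ : τ ≫ π ≫ x₁ = τ₁ := by rw [← Category.assoc, hfac, sq.lift_snd]
  have e₂ : τ ≫ π ≫ x₂ = τ₂ := by rw [← Category.assoc, hfac, sq.lift_fst]
  refine ⟨M, τ, π ≫ x₁, π ≫ x₂, hτ, P.fib_comp hπ hx₁,
    P.weq_of_comp_right hτ (e₁ ▸ hτ₁), P.fib_comp hπ (fib_of_isPullback sq.flip hq₁),
    P.weq_of_comp_right hτ (e₂ ▸ hτ₂), e₁, e₂, ?_⟩
  simp only [Category.assoc, sq.w]

lemma WeakLifting.exists_lift (hc : ∀ X : C, P.CofModel X) {A T E₀ B : C} {Δ : A ⟶ B}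
    {j : T ⟶ B} (h : P.WeakLifting Δ j) {τ₀ : T ⟶ E₀} {q₀ : E₀ ⟶ B} (hτ₀ : P.weq τ₀)
    (hq₀ : P.fib q₀) (hfac₀ : τ₀ ≫ q₀ = j) : ∃ s : A ⟶ E₀, s ≫ q₀ = Δ := by
  obtain ⟨E₁, τ₁, q₁, hτ₁, hq₁, hfac₁, s, hs⟩ := h
  obtain ⟨M, -, ρ₀, ρ₁, -, -, -, hρ₁f, hρ₁w, -, -, hq⟩ :=
    exists_common_refinement hτ₀ hq₀ hτ₁ hq₁ (hfac₀.trans hfac₁.symm)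
  obtain ⟨t, ht⟩ := hc E₁ ρ₁ hρ₁f hρ₁w
  refine ⟨s ≫ t ≫ ρ₀, ?_⟩
  rw [Category.assoc, Category.assoc, hq, ← Category.assoc t, ht, Category.id_comp, hs]

lemma weakLifting_iff_of_weq (hc : ∀ X : C, P.CofModel X) {A T T' B : C} {Δ : A ⟶ B}
    {j : T ⟶ B} {j' : T' ⟶ B} (e : T ⟶ T') (he : P.weq e) (hej : e ≫ j' = j) :
    P.WeakLifting Δ j ↔ P.WeakLifting Δ j' := by
  constructor
  · intro h
    obtain ⟨E₀, τ₀, q₀, hτ₀, hq₀, hfac₀⟩ := P.F_fac j'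
    obtain ⟨s, hs⟩ :=
      h.exists_lift hc (P.weq_comp he hτ₀) hq₀ (by rw [Category.assoc, hfac₀, hej])
    exact ⟨E₀, τ₀, q₀, hτ₀, hq₀, hfac₀, s, hs⟩
  · rintro ⟨E₁, τ, q, hτ, hq, hfac, s, hs⟩
    exact ⟨E₁, e ≫ τ, q, P.weq_comp he hτ, hq, by rw [Category.assoc, hfac, hej], s, hs⟩

lemma WeaklyEquivOver.weakLifting_iff (hc : ∀ X : C, P.CofModel X) {B : C} {u v : Over B}
    (h : P.WeaklyEquivOver u v) {A : C} (Δ : A ⟶ B) :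
    P.WeakLifting Δ u.hom ↔ P.WeakLifting Δ v.hom := by
  induction h with
  | rel u v h =>
    obtain ⟨e, he⟩ := h
    exact weakLifting_iff_of_weq hc e.left he (Over.w e)
  | refl => rfl
  | symm _ _ _ ih => exact ih.symm
  | trans _ _ _ _ _ ih₁ ih₂ => exact ih₁.trans ih₂

lemma exists_isHPushoutOver {W X Y B : C} (s : W ⟶ X) (t : W ⟶ Y) (x : X ⟶ B) (y : Y ⟶ B)
    (w : s ≫ x = t ≫ y) : ∃ (J : C) (j : J ⟶ B), P.IsHPushoutOver s t x y j := by
  obtain ⟨Z, i, σ, hi, hσ, hiσ⟩ := P.C_fac s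
  obtain ⟨J, b, a, hpo, -⟩ := P.po_exists i t hi
  exact ⟨J, hpo.desc (σ ≫ x) y (by rw [← Category.assoc, hiσ, w]), Z, i, σ, a, b, hi, hσ, hiσ,
    hpo.flip, hpo.inr_desc _ _ _, hpo.inl_desc _ _ _⟩

lemma weaklyEquivOver_of_isPushout {W X Y B Q₁ Q₂ : C} {s : W ⟶ X} {t : W ⟶ Y}
    {a₁ : X ⟶ Q₁} {b₁ : Y ⟶ Q₁} {a₂ : X ⟶ Q₂} {b₂ : Y ⟶ Q₂}
    (h₁ : IsPushout s t a₁ b₁) (h₂ : IsPushout s t a₂ b₂) {j₁ : Q₁ ⟶ B} {j₂ : Q₂ ⟶ B}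
    (ha : a₁ ≫ j₁ = a₂ ≫ j₂) (hb : b₁ ≫ j₁ = b₂ ≫ j₂) :
    P.WeaklyEquivOver (Over.mk j₁) (Over.mk j₂) := by
  refine .of_weq (h₁.isoIsPushout _ _ h₂).hom (P.weq_of_isIso _) (h₁.hom_ext ?_ ?_)
  · rw [← Category.assoc, IsPushout.inl_isoIsPushout_hom, ha]
  · rw [← Category.assoc, IsPushout.inr_isoIsPushout_hom, hb]

lemma exists_isPushout_comp_trivialCofib {W X Y B J Z Z' : C} {t : W ⟶ Y} {x : X ⟶ B}
    {y : Y ⟶ B} {j : J ⟶ B} {i : W ⟶ Z} {σ : Z ⟶ X} {a : Y ⟶ J} {b : Z ⟶ J}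
    (hpo : IsPushout t i a b) (ha : a ≫ j = y) (hb : b ≫ j = σ ≫ x) {k : Z ⟶ Z'}
    (hkc : P.cofib k) (hkw : P.weq k) {σ' : Z' ⟶ X} (hkσ : k ≫ σ' = σ) :
    ∃ (Q : C) (jQ : Q ⟶ B) (a' : Y ⟶ Q) (b' : Z' ⟶ Q), IsPushout t (i ≫ k) a' b' ∧
      a' ≫ jQ = y ∧ b' ≫ jQ = σ' ≫ x ∧ P.WeaklyEquivOver (Over.mk j) (Over.mk jQ) := by
  obtain ⟨Q, l, r, hQ, -⟩ := P.po_exists k b hkc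
  refine ⟨Q, hQ.desc (σ' ≫ x) j (by rw [← Category.assoc, hkσ, hb]), a ≫ r, l,
    hpo.paste_vert hQ.flip, ?_, hQ.inl_desc _ _ _,
    .of_weq r ((P.po_weq hkc hQ).2 hkw) (hQ.inr_desc _ _ _)⟩
  rw [Category.assoc, hQ.inr_desc, ha]

namespace IsHPushoutOver

section

variable {W X Y B J : C} {s : W ⟶ X} {t : W ⟶ Y} {x : X ⟶ B} {y : Y ⟶ B} {j : J ⟶ B}

lemma w (h : P.IsHPushoutOver s t x y j) : s ≫ x = t ≫ y := by
  obtain ⟨Z, i, σ, a, b, -, -, hiσ, hpo, ha, hb⟩ := h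
  rw [← hiσ, ← ha, Category.assoc, ← hb, ← Category.assoc, ← hpo.w, Category.assoc]

/-- Both C-factorizations are enlarged, along trivial cofibrations, to a common one. -/
lemma weaklyEquivOver {J' : C} {j' : J' ⟶ B} (h : P.IsHPushoutOver s t x y j)
    (h' : P.IsHPushoutOver s t x y j') : P.WeaklyEquivOver (Over.mk j) (Over.mk j') := by
  obtain ⟨Z₁, i₁, σ₁, a₁, b₁, hi₁, hσ₁, hiσ₁, hpo₁, ha₁, hb₁⟩ := h
  obtain ⟨Z₂, i₂, σ₂, a₂, b₂, hi₂, hσ₂, hiσ₂, hpo₂, ha₂, hb₂⟩ := h'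
  obtain ⟨V, v₁, v₂, hV, hv₂⟩ := P.po_exists i₁ i₂ hi₁
  obtain ⟨Z₃, c, σ₃, hc, hσ₃, hcσ⟩ := P.C_fac (hV.desc σ₁ σ₂ (hiσ₁.trans hiσ₂.symm))
  have e₁ : (v₁ ≫ c) ≫ σ₃ = σ₁ := by rw [Category.assoc, hcσ, hV.inl_desc]
  have e₂ : (v₂ ≫ c) ≫ σ₃ = σ₂ := by rw [Category.assoc, hcσ, hV.inr_desc]
  obtain ⟨Q₁, jQ₁, a₁', b₁', hQ₁, ha₁', hb₁', hj₁⟩ :=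
    exists_isPushout_comp_trivialCofib hpo₁ ha₁ hb₁
    (P.cofib_comp (cofib_of_isPushout hV.flip hi₂) hc)
    (P.weq_of_comp_left hσ₃ (e₁ ▸ hσ₁)) e₁
  obtain ⟨Q₂, jQ₂, a₂', b₂', hQ₂, ha₂', hb₂', hj₂⟩ :=
    exists_isPushout_comp_trivialCofib hpo₂ ha₂ hb₂
    (P.cofib_comp hv₂ hc) (P.weq_of_comp_left hσ₃ (e₂ ▸ hσ₂)) e₂
  rw [← Category.assoc, ← hV.w, Category.assoc] at hQ₂
  exact hj₁.trans ((weaklyEquivOver_of_isPushout hQ₁ hQ₂ (ha₁'.trans ha₂'.symm)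
    (hb₁'.trans hb₂'.symm)).trans hj₂.symm)

lemma comp_left {X' : C} {ξ : X ⟶ X'} {x' : X' ⟶ B}
    (h : P.IsHPushoutOver s t (ξ ≫ x') y j) (hξ : P.weq ξ) :
    P.IsHPushoutOver (s ≫ ξ) t x' y j := by
  obtain ⟨Z, i, σ, a, b, hi, hσ, hiσ, hpo, ha, hb⟩ := h
  exact ⟨Z, i, σ ≫ ξ, a, b, hi, P.weq_comp hσ hξ, by rw [← Category.assoc, hiσ], hpo, ha,
    by rw [hb, Category.assoc]⟩

lemma exists_comp_right {Y' : C} {η : Y ⟶ Y'} {y' : Y' ⟶ B}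
    (h : P.IsHPushoutOver s t x (η ≫ y') j) (hη : P.weq η) :
    ∃ (J' : C) (j' : J' ⟶ B), P.IsHPushoutOver s (t ≫ η) x y' j' ∧
      P.WeaklyEquivOver (Over.mk j) (Over.mk j') := by
  obtain ⟨Z, i, σ, a, b, hi, hσ, hiσ, hpo, ha, hb⟩ := h
  have hac : P.cofib a := cofib_of_isPushout hpo.flip hi
  obtain ⟨J', r, a', hQ, -⟩ := P.po_exists a η hac
  refine ⟨J', hQ.desc j y' ha, ⟨Z, i, σ, a', b ≫ r, hi, hσ, hiσ, hpo.paste_horiz hQ.flip,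
    hQ.inr_desc _ _ _, ?_⟩, .of_weq r ((P.po_weq hac hQ).1 hη) (hQ.inl_desc _ _ _)⟩
  rw [Category.assoc, hQ.inl_desc, hb]

lemma of_weq_comp {W' : C} {ω : W' ⟶ W} (h : P.IsHPushoutOver (ω ≫ s) (ω ≫ t) x y j)
    (hω : P.weq ω) (hw : s ≫ x = t ≫ y) : P.IsHPushoutOver s t x y j := by
  obtain ⟨Z, i, σ, a, b, hi, hσ, hiσ, hpo, ha, hb⟩ := h
  obtain ⟨Z', k, i', hZ', hi'⟩ := P.po_exists i ω hi
  have hk : P.weq k := (P.po_weq hi hZ').1 hω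
  have hb' : i ≫ b = ω ≫ t ≫ a := by rw [← Category.assoc, hpo.w]
  refine ⟨Z', i', hZ'.desc σ s hiσ, a, hZ'.desc b (t ≫ a) hb', hi',
    P.weq_of_comp_right hk (by rw [hZ'.inl_desc]; exact hσ), hZ'.inr_desc _ _ _,
    IsPushout.of_left (by rwa [hZ'.inl_desc]) (hZ'.inr_desc _ _ _).symm hZ'.flip, ha, ?_⟩
  refine hZ'.hom_ext ?_ ?_
  · rw [← Category.assoc, ← Category.assoc, hZ'.inl_desc, hZ'.inl_desc, hb]
  · rw [← Category.assoc, ← Category.assoc, hZ'.inr_desc, hZ'.inr_desc, Category.assoc, ha, hw]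

/-- The gluing lemma, proved by changing the three corners of the span one at a time. -/
lemma weaklyEquivOver_of_weq {W' X' Y' J' : C} {s' : W' ⟶ X'} {t' : W' ⟶ Y'}
    {x' : X' ⟶ B} {y' : Y' ⟶ B} {j' : J' ⟶ B} (h : P.IsHPushoutOver s t x y j)
    (h' : P.IsHPushoutOver s' t' x' y' j') {ω : W ⟶ W'} {ξ : X ⟶ X'} {η : Y ⟶ Y'}
    (hω : P.weq ω) (hξ : P.weq ξ) (hη : P.weq η) (hs : s ≫ ξ = ω ≫ s') (ht : t ≫ η = ω ≫ t')
    (hx : ξ ≫ x' = x) (hy : η ≫ y' = y) : P.WeaklyEquivOver (Over.mk j) (Over.mk j') := by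
  subst hx hy
  obtain ⟨J'', j'', h'', hj''⟩ := (h.comp_left hξ).exists_comp_right hη
  rw [hs, ht] at h''
  exact hj''.trans ((h''.of_weq_comp hω h'.w).weaklyEquivOver h')

end

lemma weaklyEquivOver_of_isPullback_of_trivialFib {A B E M E' E'' J J' : C} {f : A ⟶ B}
    {q : E ⟶ B} {ρ : M ⟶ E} {fbar : E' ⟶ E} {pbar : E' ⟶ A} {fbar' : E'' ⟶ M}
    {pbar' : E'' ⟶ A} {j : J ⟶ B} {j' : J' ⟶ B} (sq : IsPullback fbar pbar q f)
    (sq' : IsPullback fbar' pbar' (ρ ≫ q) f) (hρf : P.fib ρ) (hρw : P.weq ρ)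
    (h : P.IsHPushoutOver fbar pbar q f j) (h' : P.IsHPushoutOver fbar' pbar' (ρ ≫ q) f j') :
    P.WeaklyEquivOver (Over.mk j') (Over.mk j) := by
  set ω := sq.lift (fbar' ≫ ρ) pbar' (by rw [Category.assoc, sq'.w])
  have hω : IsPullback fbar' ω ρ fbar := by
    refine IsPullback.of_bot ?_ (sq.lift_fst _ _ _).symm sq
    rwa [sq.lift_snd]
  exact h'.weaklyEquivOver_of_weq h ((P.pb_weq hρf hω).2 hρw) hρw (P.weq_of_isIso (𝟙 A))
    (sq.lift_fst _ _ _).symm (by simp [ω]) rfl (Category.id_comp f)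

lemma weaklyEquivOver_of_isPullback_of_weq {A A' B E E' E'' J J' : C} {f : A' ⟶ B}
    {u : A ⟶ A'} {q : E ⟶ B} {fbar : E' ⟶ E} {pbar : E' ⟶ A'} {fbar' : E'' ⟶ E}
    {pbar' : E'' ⟶ A} {j : J ⟶ B} {j' : J' ⟶ B} (sq : IsPullback fbar pbar q f)
    (sq' : IsPullback fbar' pbar' q (u ≫ f)) (hq : P.fib q) (hu : P.weq u)
    (h : P.IsHPushoutOver fbar pbar q f j) (h' : P.IsHPushoutOver fbar' pbar' q (u ≫ f) j') :
    P.WeaklyEquivOver (Over.mk j') (Over.mk j) := by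
  set ω := sq.lift fbar' (pbar' ≫ u) (by rw [sq'.w, Category.assoc])
  have hω : IsPullback ω pbar' pbar u := by
    refine IsPullback.of_right ?_ (sq.lift_snd _ _ _) sq
    rwa [sq.lift_fst]
  exact h'.weaklyEquivOver_of_weq h ((P.pb_weq (fib_of_isPullback sq hq) hω).1 hu)
    (P.weq_of_isIso (𝟙 E)) hu (by simp [ω]) (sq.lift_snd _ _ _).symm (Category.id_comp q) rfl

end IsHPushoutOver

lemma isJoin_iff {A Cc B J : C} {f : A ⟶ B} {g : Cc ⟶ B} {j : J ⟶ B} :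
    P.IsJoin f g j ↔ ∃ (E : C) (τ : Cc ⟶ E) (q : E ⟶ B), P.weq τ ∧ P.fib q ∧ τ ≫ q = g ∧
      ∃ (E' : C) (fbar : E' ⟶ E) (pbar : E' ⟶ A), IsPullback fbar pbar q f ∧
        P.IsHPushoutOver fbar pbar q f j := by
  constructor
  · rintro ⟨E, τ, q, hτ, hq, hg, E', Z, fbar, pbar, i, σ, a, b, sq, hi, hσ, hiσ, hpo, ha, hb⟩
    exact ⟨E, τ, q, hτ, hq, hg, E', fbar, pbar, sq, Z, i, σ, a, b, hi, hσ, hiσ, hpo, ha, hb⟩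
  · rintro ⟨E, τ, q, hτ, hq, hg, E', fbar, pbar, sq, Z, i, σ, a, b, hi, hσ, hiσ, hpo, ha, hb⟩
    exact ⟨E, τ, q, hτ, hq, hg, E', Z, fbar, pbar, i, σ, a, b, sq, hi, hσ, hiσ, hpo, ha, hb⟩

lemma exists_isJoin {A Cc B : C} (f : A ⟶ B) (g : Cc ⟶ B) :
    ∃ (J : C) (j : J ⟶ B), P.IsJoin f g j := by
  obtain ⟨E, τ, q, hτ, hq, hg⟩ := P.F_fac g
  obtain ⟨E', fbar, pbar, sq, -⟩ := P.pb_exists q f hq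
  obtain ⟨J, j, hj⟩ := exists_isHPushoutOver fbar pbar q f sq.w
  exact ⟨J, j, isJoin_iff.2 ⟨E, τ, q, hτ, hq, hg, E', fbar, pbar, sq, hj⟩⟩

/-- The two F-factorizations are dominated by a common one, over which both joins are
compared by the gluing lemma. -/
lemma IsJoin.weaklyEquivOver {A Cc B J₁ J₂ : C} {f : A ⟶ B} {g : Cc ⟶ B} {j₁ : J₁ ⟶ B}
    {j₂ : J₂ ⟶ B} (h₁ : P.IsJoin f g j₁) (h₂ : P.IsJoin f g j₂) :
    P.WeaklyEquivOver (Over.mk j₁) (Over.mk j₂) := by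
  obtain ⟨E₁, τ₁, q₁, hτ₁, hq₁, hg₁, E₁', fbar₁, pbar₁, sq₁, hj₁⟩ := isJoin_iff.1 h₁
  obtain ⟨E₂, τ₂, q₂, hτ₂, hq₂, hg₂, E₂', fbar₂, pbar₂, sq₂, hj₂⟩ := isJoin_iff.1 h₂
  obtain ⟨M, -, ρ₁, ρ₂, -, hρ₁f, hρ₁w, hρ₂f, hρ₂w, -, -, hq⟩ :=
    exists_common_refinement hτ₁ hq₁ hτ₂ hq₂ (hg₁.trans hg₂.symm)
  obtain ⟨E', fbar, pbar, sq, -⟩ := P.pb_exists (ρ₁ ≫ q₁) f (P.fib_comp hρ₁f hq₁)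
  obtain ⟨J, j, hj⟩ := exists_isHPushoutOver fbar pbar _ f sq.w
  have l₁ := hj₁.weaklyEquivOver_of_isPullback_of_trivialFib sq₁ sq hρ₁f hρ₁w hj
  rw [hq] at sq hj
  exact l₁.symm.trans (hj₂.weaklyEquivOver_of_isPullback_of_trivialFib sq₂ sq hρ₂f hρ₂w hj)

lemma IsJoin.weaklyEquivOver_of_weq_left {A A' Cc B J J' : C} {f : A ⟶ B} {f' : A' ⟶ B}
    {g : Cc ⟶ B} {j : J ⟶ B} {j' : J' ⟶ B} (u : A ⟶ A') (hu : P.weq u) (huf : u ≫ f' = f)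
    (h : P.IsJoin f g j) (h' : P.IsJoin f' g j') :
    P.WeaklyEquivOver (Over.mk j) (Over.mk j') := by
  subst huf
  obtain ⟨E, τ, q, hτ, hq, hg⟩ := P.F_fac g
  obtain ⟨E₁, fbar₁, pbar₁, sq₁, -⟩ := P.pb_exists q (u ≫ f') hq
  obtain ⟨E₂, fbar₂, pbar₂, sq₂, -⟩ := P.pb_exists q f' hq
  obtain ⟨J₁, j₁, hj₁⟩ := exists_isHPushoutOver fbar₁ pbar₁ q _ sq₁.w
  obtain ⟨J₂, j₂, hj₂⟩ := exists_isHPushoutOver fbar₂ pbar₂ q _ sq₂.w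
  have c₁ : P.IsJoin (u ≫ f') g j₁ := isJoin_iff.2 ⟨E, τ, q, hτ, hq, hg, E₁, _, _, sq₁, hj₁⟩
  have c₂ : P.IsJoin f' g j₂ := isJoin_iff.2 ⟨E, τ, q, hτ, hq, hg, E₂, _, _, sq₂, hj₂⟩
  exact (h.weaklyEquivOver c₁).trans
    ((hj₂.weaklyEquivOver_of_isPullback_of_weq sq₂ sq₁ hq hu hj₁).trans (c₂.weaklyEquivOver h'))

lemma IsJoin.weaklyEquivOver_of_weq_right {A Cc Cc' B J J' : C} {f : A ⟶ B} {g : Cc ⟶ B}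
    {g' : Cc' ⟶ B} {j : J ⟶ B} {j' : J' ⟶ B} (v : Cc ⟶ Cc') (hv : P.weq v) (hvg : v ≫ g' = g)
    (h : P.IsJoin f g j) (h' : P.IsJoin f g' j') :
    P.WeaklyEquivOver (Over.mk j) (Over.mk j') := by
  obtain ⟨E, τ, q, hτ, hq, hg, hJ⟩ := isJoin_iff.1 h'
  have c : P.IsJoin f g j' :=
    isJoin_iff.2 ⟨E, v ≫ τ, q, P.weq_comp hv hτ, hq, by rw [Category.assoc, hg, hvg], hJ⟩
  exact h.weaklyEquivOver c

lemma WeaklyEquivOver.isJoin {B Cc : C} {g : Cc ⟶ B} {u v : Over B}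
    (h : P.WeaklyEquivOver u v) {J J' : C} {j : J ⟶ B} {j' : J' ⟶ B}
    (hu : P.IsJoin u.hom g j) (hv : P.IsJoin v.hom g j') :
    P.WeaklyEquivOver (Over.mk j) (Over.mk j') := by
  induction h generalizing J J' j j' with
  | rel u v h =>
    obtain ⟨e, he⟩ := h
    exact hu.weaklyEquivOver_of_weq_left e.left he (Over.w e) hv
  | refl => exact hu.weaklyEquivOver hv
  | symm _ _ _ ih => exact (ih hv hu).symm
  | trans _ w _ _ _ ih₁ ih₂ =>
    obtain ⟨Jw, jw, hw⟩ := P.exists_isJoin w.hom g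
    exact (ih₁ hu hw).trans (ih₂ hw hv)

lemma exists_weq_lift_of_isPullback {X Y Yh B B' : C} {Θ : B' ⟶ B} {y : Y ⟶ B}
    {yh : Yh ⟶ B'} {ρ : Yh ⟶ Y} (sq : IsPullback yh ρ Θ y) (hρ : P.weq ρ) {x : X ⟶ B'}
    {u : X ⟶ Y} (hu : P.weq u) (hxu : x ≫ Θ = u ≫ y) :
    ∃ e : X ⟶ Yh, P.weq e ∧ e ≫ yh = x :=
  ⟨sq.lift x u hxu, P.weq_of_comp_left hρ (by rw [sq.lift_snd]; exact hu), sq.lift_fst _ _ _⟩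

lemma exists_fFactorization_pullback {T Th B B' E₀ : C} {j : T ⟶ B} {Θ : B' ⟶ B}
    (hΘf : P.fib Θ) (hΘw : P.weq Θ) {jh : Th ⟶ B'} {ρ : Th ⟶ T} (sq : IsPullback jh ρ Θ j)
    {τ₀ : T ⟶ E₀} {q₀ : E₀ ⟶ B} (hτ₀ : P.weq τ₀) (hq₀ : P.fib q₀) (hfac₀ : τ₀ ≫ q₀ = j) :
    ∃ (X : C) (z : Th ⟶ X) (xE : X ⟶ E₀) (xq : X ⟶ B'),
      P.weq z ∧ P.fib xq ∧ z ≫ xq = jh ∧ IsPullback xE xq q₀ Θ := by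
  obtain ⟨X, xE, xq, sqX, hxq⟩ := P.pb_exists q₀ Θ hq₀
  refine ⟨X, sqX.lift (ρ ≫ τ₀) jh (by rw [Category.assoc, hfac₀, sq.w]), xE, xq, ?_, hxq,
    sqX.lift_snd _ _ _, sqX⟩
  exact P.weq_of_comp_left ((P.pb_weq hΘf sqX.flip).2 hΘw)
    (by rw [sqX.lift_fst]; exact P.weq_comp ((P.pb_weq hΘf sq).2 hΘw) hτ₀)

lemma weakLifting_iff_of_isPullback (hc : ∀ X : C, P.CofModel X) {G F : C} {θ : G ⟶ F}
    (hθf : P.fib θ) (hθw : P.weq θ) {T Th B B' : C} {j : T ⟶ B} {Θ : B' ⟶ B}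
    (hΘf : P.fib Θ) (hΘw : P.weq Θ) {jh : Th ⟶ B'} {ρ : Th ⟶ T} (sq : IsPullback jh ρ Θ j)
    {ΔF : F ⟶ B} {ΔG : G ⟶ B'} (hΔ : ΔG ≫ Θ = θ ≫ ΔF) :
    P.WeakLifting ΔF j ↔ P.WeakLifting ΔG jh := by
  constructor
  · rintro ⟨E₁, τ₁, q₁, hτ₁, hq₁, hfac₁, s₁, hs₁⟩
    obtain ⟨X, z, xE, xq, hz, hxq, hzq, sqX⟩ :=
      exists_fFactorization_pullback hΘf hΘw sq hτ₁ hq₁ hfac₁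
    exact ⟨X, z, xq, hz, hxq, hzq,
      sqX.lift (θ ≫ s₁) ΔG (by rw [Category.assoc, hs₁, hΔ]), sqX.lift_snd _ _ _⟩
  · intro hwl
    obtain ⟨E₀, τ₀, q₀, hτ₀, hq₀, hfac₀⟩ := P.F_fac j
    obtain ⟨X, z, xE, xq, hz, hxq, hzq, sqX⟩ :=
      exists_fFactorization_pullback hΘf hΘw sq hτ₀ hq₀ hfac₀
    obtain ⟨t, ht⟩ := hwl.exists_lift hc hz hxq hzq
    obtain ⟨s, hs⟩ := hc F θ hθf hθw
    refine ⟨E₀, τ₀, q₀, hτ₀, hq₀, hfac₀, s ≫ t ≫ xE, ?_⟩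
    simp only [Category.assoc, sqX.w]
    rw [← Category.assoc t, ht, hΔ, ← Category.assoc, hs, Category.id_comp]

lemma isHPB_of_isPullback {D A Cc B : C} {f' : D ⟶ Cc} {g' : D ⟶ A} {g : Cc ⟶ B}
    {f : A ⟶ B} (h : IsPullback f' g' g f) (hg : P.fib g) : P.IsHPB f' g' g f :=
  ⟨h.w, Cc, 𝟙 _, g, P.weq_of_isIso _, hg, Category.id_comp g, D, f', g', h, 𝟙 _,
    P.weq_of_isIso _, by simp, by simp⟩

lemma isHPO_of_isPushout {A B Cc D : C} {f : A ⟶ B} {g : A ⟶ Cc} {i' : B ⟶ D}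
    {j' : Cc ⟶ D} (h : IsPushout f g i' j') (hf : P.cofib f) : P.IsHPO f g i' j' :=
  ⟨h.w, B, f, 𝟙 _, hf, P.weq_of_isIso _, Category.comp_id f, D, i', j', by simpa using h, 𝟙 _,
    P.weq_of_isIso _, by simp, by simp⟩

lemma IsHPO.exists_isHPushoutOver {W X Y D B : C} {s : W ⟶ X} {t : W ⟶ Y} {i' : X ⟶ D}
    {j' : Y ⟶ D} (h : P.IsHPO s t i' j') (d : D ⟶ B) :
    ∃ (Q : C) (w : Q ⟶ D), P.weq w ∧ P.IsHPushoutOver s t (i' ≫ d) (j' ≫ d) (w ≫ d) := by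
  obtain ⟨-, Z, i, σ, hi, hσ, hiσ, Q, inl, inr, hpo, w, hw, hinl, hinr⟩ := h
  exact ⟨Q, w, hw, Z, i, σ, inr, inl, hi, hσ, hiσ, hpo.flip, by rw [← Category.assoc, hinr],
    by rw [← Category.assoc, hinl, Category.assoc]⟩

end PreJCat

namespace JCat

variable (J : JCat C)

/-- Pulling the pushout square back along `Θ` gives a cube whose vertical faces are
pullbacks along fibrations, so its top face is a homotopy pushout by the cube axiom. -/
lemma exists_isHPushoutOver_pullback {W X Y B B' Jo : C} {s : W ⟶ X} {t : W ⟶ Y}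
    {x : X ⟶ B} {y : Y ⟶ B} {j : Jo ⟶ B} (h : J.IsHPushoutOver s t x y j) {Θ : B' ⟶ B}
    (hΘf : J.fib Θ) (hΘw : J.weq Θ) {Wh Xh Yh Jh : C} {wh : Wh ⟶ B'} {ρW : Wh ⟶ W}
    {xh : Xh ⟶ B'} {ρX : Xh ⟶ X} {yh : Yh ⟶ B'} {ρY : Yh ⟶ Y} {jh : Jh ⟶ B'} {ρJ : Jh ⟶ Jo}
    (sqW : IsPullback wh ρW Θ (s ≫ x)) (sqX : IsPullback xh ρX Θ x)
    (sqY : IsPullback yh ρY Θ y) (sqJ : IsPullback jh ρJ Θ j) {sh : Wh ⟶ Xh} {th : Wh ⟶ Yh}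
    (hs₁ : sh ≫ xh = wh) (hs₂ : sh ≫ ρX = ρW ≫ s) (ht₁ : th ≫ yh = wh)
    (ht₂ : th ≫ ρY = ρW ≫ t) :
    ∃ (Q : C) (jQ : Q ⟶ B'), J.IsHPushoutOver sh th xh yh jQ ∧
      J.WeaklyEquivOver (Over.mk jQ) (Over.mk jh) := by
  have hw := h.w
  obtain ⟨Z, i, σ, a, b, hi, hσ, hiσ, hpo, ha, hb⟩ := h
  obtain ⟨Zh, zh, ρZ, sqZ, -⟩ := J.pb_exists Θ (σ ≫ x) hΘf
  have weq_ρ {V Vh : C} {v : V ⟶ B} {vh : Vh ⟶ B'} {ρ : Vh ⟶ V} (sq : IsPullback vh ρ Θ v) :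
      J.weq ρ := (J.pb_weq hΘf sq).2 hΘw
  have fib_ρ {V Vh : C} {v : V ⟶ B} {vh : Vh ⟶ B'} {ρ : Vh ⟶ V} (sq : IsPullback vh ρ Θ v) :
      J.fib ρ := PreJCat.fib_of_isPullback sq hΘf
  obtain ⟨ih, hih, faceI⟩ := exists_pullback_map sqW sqZ i (by rw [← Category.assoc, hiσ])
  obtain ⟨σh, hσh, faceσ⟩ := exists_pullback_map sqZ sqX σ rfl
  obtain ⟨bh, hbh, faceB⟩ := exists_pullback_map sqZ sqJ b hb
  obtain ⟨ah, hah, faceA⟩ := exists_pullback_map sqY sqJ a ha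
  have faceT := isPullback_of_pullback_map sqW sqY hw.symm ht₁ ht₂
  have top : ih ≫ bh = th ≫ ah := by
    refine sqJ.hom_ext ?_ ?_
    · simp only [Category.assoc, hbh, hah, hih, ht₁]
    · rw [Category.assoc, Category.assoc, faceB.w, faceA.w, ← Category.assoc, faceI.w,
        ← Category.assoc, faceT.w, Category.assoc, Category.assoc, hpo.w]
  obtain ⟨Q, e, he, hQ⟩ := (J.cube top (PreJCat.isHPO_of_isPushout hpo.flip hi)
    (PreJCat.isHPB_of_isPullback faceI (fib_ρ sqZ))
    (PreJCat.isHPB_of_isPullback faceT (fib_ρ sqY))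
    (PreJCat.isHPB_of_isPullback faceB (fib_ρ sqJ))
    (PreJCat.isHPB_of_isPullback faceA (fib_ρ sqJ))).exists_isHPushoutOver jh
  rw [hbh, hah, ← hσh] at hQ
  have hσhw : J.weq σh :=
    J.weq_of_comp_left (weq_ρ sqX) (by rw [faceσ.w]; exact J.weq_comp (weq_ρ sqZ) hσ)
  have hsh : ih ≫ σh = sh := by
    refine sqX.hom_ext ?_ ?_
    · rw [Category.assoc, hσh, hih, hs₁]
    · rw [Category.assoc, faceσ.w, ← Category.assoc, faceI.w, Category.assoc, hiσ, hs₂]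
  refine ⟨Q, e ≫ jh, ?_, .of_weq e he rfl⟩
  rw [← hsh]
  exact hQ.comp_left hσhw

lemma exists_isJoin_pullback {A Cc B B' Jo : C} {f : A ⟶ B} {g : Cc ⟶ B} {j : Jo ⟶ B}
    (h : J.IsJoin f g j) {Θ : B' ⟶ B} (hΘf : J.fib Θ) (hΘw : J.weq Θ) {Ah Ch Jh : C}
    {fh : Ah ⟶ B'} {ρA : Ah ⟶ A} {gh : Ch ⟶ B'} {ρC : Ch ⟶ Cc} {jh : Jh ⟶ B'} {ρJ : Jh ⟶ Jo}
    (sqA : IsPullback fh ρA Θ f) (sqC : IsPullback gh ρC Θ g) (sqJ : IsPullback jh ρJ Θ j) :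
    ∃ (Q : C) (jQ : Q ⟶ B'), J.IsJoin fh gh jQ ∧
      J.WeaklyEquivOver (Over.mk jQ) (Over.mk jh) := by
  obtain ⟨E, τ, q, hτ, hq, hg, E', fbar, pbar, sq, hj⟩ := PreJCat.isJoin_iff.1 h
  obtain ⟨Eh, qh, ρE, sqE, -⟩ := J.pb_exists Θ q hΘf
  obtain ⟨E'h, wh, ρE', sqE', -⟩ := J.pb_exists Θ (fbar ≫ q) hΘf
  obtain ⟨τh, hτh, faceτ⟩ := exists_pullback_map sqC sqE τ hg
  obtain ⟨fbarh, hfbarh, faceF⟩ := exists_pullback_map sqE' sqE fbar rfl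
  obtain ⟨pbarh, hpbarh, faceP⟩ := exists_pullback_map sqE' sqA pbar sq.w.symm
  obtain ⟨Q, jQ, hQ, hl⟩ := J.exists_isHPushoutOver_pullback hj hΘf hΘw sqE' sqE sqA sqJ
    hfbarh faceF.w hpbarh faceP.w
  have hτhw : J.weq τh := J.weq_of_comp_left ((J.pb_weq hΘf sqE).2 hΘw)
    (by rw [faceτ.w]; exact J.weq_comp ((J.pb_weq hΘf sqC).2 hΘw) hτ)
  refine ⟨Q, jQ, PreJCat.isJoin_iff.2 ⟨Eh, τh, qh, hτhw, PreJCat.fib_of_isPullback sqE.flip hq,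
    hτh, E'h, fbarh, pbarh, ?_, hQ⟩, hl⟩
  exact isPullback_pullback_of_isPullback sq sqE sqA sqE' hfbarh faceF.w hpbarh faceP.w

end JCat

end Homotopy

namespace IsBinProd

variable {X Y W : C} {p1 : W ⟶ X} {p2 : W ⟶ Y}

lemma isPullback (h : IsBinProd p1 p2) : IsPullback p1 p2 (0 : X ⟶ 0) (0 : Y ⟶ 0) := by
  obtain ⟨hl⟩ := h
  convert IsPullback.of_is_product' hl HasZeroObject.zeroIsTerminal using 2 <;>
    exact HasZeroObject.zeroIsTerminal.hom_ext _ _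

lemma of_isPullback (h : IsPullback p1 p2 (0 : X ⟶ 0) (0 : Y ⟶ 0)) : IsBinProd p1 p2 :=
  ⟨isProductOfIsTerminalIsPullback _ _ p1 p2 HasZeroObject.zeroIsTerminal h.isLimit⟩

lemma swap (h : IsBinProd p1 p2) : IsBinProd p2 p1 :=
  of_isPullback h.isPullback.flip

noncomputable def lift (h : IsBinProd p1 p2) {V : C} (a : V ⟶ X) (b : V ⟶ Y) : V ⟶ W :=
  h.isPullback.lift a b (by simp)

@[simp]
lemma lift_fst (h : IsBinProd p1 p2) {V : C} (a : V ⟶ X) (b : V ⟶ Y) : h.lift a b ≫ p1 = a :=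
  h.isPullback.lift_fst a b _

@[simp]
lemma lift_snd (h : IsBinProd p1 p2) {V : C} (a : V ⟶ X) (b : V ⟶ Y) : h.lift a b ≫ p2 = b :=
  h.isPullback.lift_snd a b _

@[simp]
lemma lift_fst_assoc (h : IsBinProd p1 p2) {V Z : C} (a : V ⟶ X) (b : V ⟶ Y) (k : X ⟶ Z) :
    h.lift a b ≫ p1 ≫ k = a ≫ k := by
  rw [← Category.assoc, lift_fst]

@[simp]
lemma lift_snd_assoc (h : IsBinProd p1 p2) {V Z : C} (a : V ⟶ X) (b : V ⟶ Y) (k : Y ⟶ Z) :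
    h.lift a b ≫ p2 ≫ k = b ≫ k := by
  rw [← Category.assoc, lift_snd]

lemma hom_ext (h : IsBinProd p1 p2) {V : C} {k l : V ⟶ W} (h1 : k ≫ p1 = l ≫ p1)
    (h2 : k ≫ p2 = l ≫ p2) : k = l :=
  h.isPullback.hom_ext h1 h2

lemma isPullback_lift_comp_fst (h : IsBinProd p1 p2) {X' W' : C} {p1' : W' ⟶ X'}
    {p2' : W' ⟶ Y} (h' : IsBinProd p1' p2') (u : X ⟶ X') :
    IsPullback (h'.lift (p1 ≫ u) p2) p1 p1' u := by
  refine IsPullback.of_right ?_ (h'.lift_fst _ _) h'.swap.isPullback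
  simpa using h.swap.isPullback

lemma isPullback_lift_comp_snd (h : IsBinProd p1 p2) {Y' W' : C} {p1' : W' ⟶ X}
    {p2' : W' ⟶ Y'} (h' : IsBinProd p1' p2') (v : Y ⟶ Y') :
    IsPullback (h'.lift p1 (p2 ≫ v)) p2 p2' v := by
  refine IsPullback.of_right ?_ (h'.lift_snd _ _) h'.isPullback
  simpa using h.isPullback

end IsBinProd

namespace PreJCat

variable {P : PreJCat C}

lemma EFibrant.of_fib {X Y : C} {q : X ⟶ Y} (hq : P.fib q) (hY : P.EFibrant Y) :
    P.EFibrant X := by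
  simpa [EFibrant] using P.fib_comp hq hY

lemma exists_isBinProd (X : C) {Y : C} (hY : P.EFibrant Y) :
    ∃ (W : C) (p1 : W ⟶ X) (p2 : W ⟶ Y), IsBinProd p1 p2 := by
  obtain ⟨W, p2, p1, h, -⟩ := P.pb_exists (0 : Y ⟶ 0) (0 : X ⟶ 0) hY
  exact ⟨W, p1, p2, IsBinProd.of_isPullback h.flip⟩

lemma fib_fst_of_isBinProd {X Y W : C} {p1 : W ⟶ X} {p2 : W ⟶ Y} (h : IsBinProd p1 p2)
    (hY : P.EFibrant Y) : P.fib p1 :=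
  fib_of_isPullback h.isPullback.flip hY

lemma EFibrant.of_isBinProd {X Y W : C} {p1 : W ⟶ X} {p2 : W ⟶ Y} (h : IsBinProd p1 p2)
    (hX : P.EFibrant X) (hY : P.EFibrant Y) : P.EFibrant W :=
  .of_fib (fib_fst_of_isBinProd h hY) hX

lemma trivialFib_prodMap {X Y W X' Y' W' : C} {p1 : W ⟶ X} {p2 : W ⟶ Y} {p1' : W' ⟶ X'}
    {p2' : W' ⟶ Y'} (h : IsBinProd p1 p2) (h' : IsBinProd p1' p2') (hY : P.EFibrant Y)
    {u : X ⟶ X'} {v : Y ⟶ Y'} (huf : P.fib u) (huw : P.weq u) (hvf : P.fib v) (hvw : P.weq v) :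
    P.fib (h'.lift (p1 ≫ u) (p2 ≫ v)) ∧ P.weq (h'.lift (p1 ≫ u) (p2 ≫ v)) := by
  obtain ⟨M, m1, m2, hM⟩ := exists_isBinProd X' hY
  have sqU := h.isPullback_lift_comp_fst hM u
  have sqV := hM.isPullback_lift_comp_snd h' v
  have hfac : hM.lift (p1 ≫ u) p2 ≫ h'.lift m1 (m2 ≫ v) = h'.lift (p1 ≫ u) (p2 ≫ v) :=
    h'.hom_ext (by simp)
      (by rw [Category.assoc, h'.lift_snd, ← Category.assoc, hM.lift_snd, h'.lift_snd])
  rw [← hfac]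
  exact ⟨P.fib_comp (fib_of_isPullback sqU.flip huf) (fib_of_isPullback sqV.flip hvf),
    P.weq_comp ((P.pb_weq huf sqU.flip).2 huw) ((P.pb_weq hvf sqV.flip).2 hvw)⟩

lemma exists_isFatWedge {E B : C} (hB : P.EFibrant B) (p : E ⟶ B) :
    ∀ m : ℕ, ∃ (T Pw : C) (j : T ⟶ Pw) (Δ : B ⟶ Pw), P.IsFatWedge p m j Δ ∧ P.EFibrant Pw
  | 0 => ⟨E, B, p, 𝟙 B, .zero, hB⟩
  | m + 1 => by
    obtain ⟨T, Pn, j, Δ, hj, hPn⟩ := exists_isFatWedge hB p m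
    obtain ⟨Pn1, pr1, pr2, hP⟩ := exists_isBinProd Pn hB
    obtain ⟨TB, q1, q2, hTB⟩ := exists_isBinProd T hB
    obtain ⟨PE, r2, r1, hPE⟩ := exists_isBinProd E hPn
    obtain ⟨Tn1, j', hjoin⟩ := exists_isJoin (hP.lift (q1 ≫ j) q2) (hP.lift r1 (r2 ≫ p))
    exact ⟨Tn1, Pn1, j', hP.lift Δ (𝟙 B),
      .succ hj hP hTB hPE.swap ⟨hP.lift_fst _ _, hP.lift_snd _ _⟩
        ⟨hP.lift_fst _ _, hP.lift_snd _ _⟩ hjoin ⟨hP.lift_fst _ _, hP.lift_snd _ _⟩,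
      .of_isBinProd hP hPn hB⟩

lemma WeaklyEquivOver.prod {G : C} (hG : P.EFibrant G) {B W : C} {p1 : W ⟶ B} {p2 : W ⟶ G}
    (hP : IsBinProd p1 p2) {u v : Over B} (h : P.WeaklyEquivOver u v) {U V : C}
    {au : U ⟶ u.left} {bu : U ⟶ G} {av : V ⟶ v.left} {bv : V ⟶ G} (hu : IsBinProd au bu)
    (hv : IsBinProd av bv) :
    P.WeaklyEquivOver (Over.mk (hP.lift (au ≫ u.hom) bu)) (Over.mk (hP.lift (av ≫ v.hom) bv)) := by
  have step {u v : Over B} (e : u.left ⟶ v.left) (he : P.weq e) (hev : e ≫ v.hom = u.hom)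
      {U V : C} {au : U ⟶ u.left} {bu : U ⟶ G} {av : V ⟶ v.left} {bv : V ⟶ G}
      (hu : IsBinProd au bu) (hv : IsBinProd av bv) :
      P.WeaklyEquivOver (Over.mk (hP.lift (au ≫ u.hom) bu))
        (Over.mk (hP.lift (av ≫ v.hom) bv)) := by
    have sq := hu.isPullback_lift_comp_fst hv e
    refine .of_weq _ ((P.pb_weq (fib_fst_of_isBinProd hv hG) sq).1 he) (hP.hom_ext ?_ ?_)
    · rw [Category.assoc, hP.lift_fst, hP.lift_fst, ← Category.assoc, hv.lift_fst,
        Category.assoc, hev]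
    · simp
  induction h generalizing U V with
  | rel u v h =>
    obtain ⟨e, he⟩ := h
    exact step e.left he (Over.w e) hu hv
  | refl u => exact step (𝟙 _) (P.weq_of_isIso _) (Category.id_comp _) hu hv
  | symm _ _ _ ih => exact (ih hv hu).symm
  | trans _ w _ _ _ ih₁ ih₂ =>
    obtain ⟨M, m1, m2, hM⟩ := exists_isBinProd w.left hG
    exact (ih₁ hu hM).trans (ih₂ hM hv)

lemma weaklyEquivOver_pullback_prodMap {G F T T' Tm Pn Pn' Pn1 PwG TB TBG TBh : C}
    {θ : G ⟶ F} (hθf : P.fib θ) (hθw : P.weq θ) (hG : P.EFibrant G) {Θm : Pn' ⟶ Pn}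
    (hΘmf : P.fib Θm) (hΘmw : P.weq Θm) {j : T ⟶ Pn} {jm : Tm ⟶ Pn'} {ρm : Tm ⟶ T}
    (sqm : IsPullback jm ρm Θm j) {jG : T' ⟶ Pn'} 
    (hm : P.WeaklyEquivOver (Over.mk jm) (Over.mk jG))
    {pr1 : Pn1 ⟶ Pn} {pr2 : Pn1 ⟶ F} (hP : IsBinProd pr1 pr2) {pr1G : PwG ⟶ Pn'}
    {pr2G : PwG ⟶ G} (hPG : IsBinProd pr1G pr2G) {q1 : TB ⟶ T} {q2 : TB ⟶ F}
    (hTB : IsBinProd q1 q2) {q1G : TBG ⟶ T'} {q2G : TBG ⟶ G} (hTBG : IsBinProd q1G q2G)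
    {jh : TBh ⟶ PwG} {ρ : TBh ⟶ TB}
    (sq : IsPullback jh ρ (hP.lift (pr1G ≫ Θm) (pr2G ≫ θ)) (hP.lift (q1 ≫ j) q2)) :
    P.WeaklyEquivOver (Over.mk jh) (Over.mk (hPG.lift (q1G ≫ jG) q2G)) := by
  obtain ⟨U, au, bu, hU⟩ := exists_isBinProd Tm hG
  have hUlink := hm.prod hG hPG hU hTBG
  dsimp only [Over.mk_hom, Over.mk_left] at hUlink
  obtain ⟨hΘf, hΘw⟩ := trivialFib_prodMap hPG hP hG hΘmf hΘmw hθf hθw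
  obtain ⟨e, he, hej⟩ := exists_weq_lift_of_isPullback (x := hPG.lift (au ≫ jm) bu) sq
    ((P.pb_weq hΘf sq).2 hΘw)
    (trivialFib_prodMap hU hTB hG (fib_of_isPullback sqm hΘmf)
      ((P.pb_weq hΘmf sqm).2 hΘmw) hθf hθw).2
    (hP.hom_ext (by simp [← sqm.w]) (by simp))
  exact (WeaklyEquivOver.of_weq e he hej).symm.trans hUlink

end PreJCat

namespace JCat

variable (J : JCat C)

/-- The power `Θ` of `θ` is built factor by factor, and the pullback along `Θ` of each join
is again a join by `exists_isJoin_pullback`. -/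
lemma exists_isFatWedge_comparison {E G F : C} {h : E ⟶ G} {θ : G ⟶ F} (hθf : J.fib θ)
    (hθw : J.weq θ) (hG : J.EFibrant G) {m : ℕ} {TF PwF : C} {jF : TF ⟶ PwF} {ΔF : F ⟶ PwF}
    (hF : J.IsFatWedge (h ≫ θ) m jF ΔF) :
    ∀ {TG PwG : C} {jG : TG ⟶ PwG} {ΔG : G ⟶ PwG}, J.IsFatWedge h m jG ΔG →
      ∃ Θ : PwG ⟶ PwF, J.fib Θ ∧ J.weq Θ ∧ ΔG ≫ Θ = θ ≫ ΔF ∧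
        ∃ (Th : C) (jh : Th ⟶ PwG) (ρ : Th ⟶ TF), IsPullback jh ρ Θ jF ∧
          J.WeaklyEquivOver (Over.mk jh) (Over.mk jG) := by
  induction hF with
  | zero =>
    intro TG PwG jG ΔG hG'
    cases hG'
    obtain ⟨Th, jh, ρ, sq, -⟩ := J.pb_exists θ (h ≫ θ) hθf
    have hρ : J.weq ρ := (J.pb_weq hθf sq).2 hθw
    have he : J.weq (sq.lift h (𝟙 E) (by simp)) :=
      J.weq_of_comp_left hρ (by rw [sq.lift_snd]; exact J.weq_of_isIso _)
    exact ⟨θ, hθf, hθw, by simp, Th, jh, ρ, sq,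
      (PreJCat.WeaklyEquivOver.of_weq _ he (sq.lift_fst _ _ _)).symm⟩
  | @succ n T Pn j Δ _ Pn1 pr1 pr2 hP TB q1 q2 hTB PE r1 r2 hPE jB hjB pP hpP _ j' hjoin
      Δ' hΔ ih =>
    intro TG PwG jG ΔG hG'
    cases hG' with
    | @succ _ T' Pn' jGp ΔGp hprevG _ pr1G pr2G hPG TBG q1G q2G hTBG PEG r1G r2G hPEG
        jBG hjBG pPG hpPG _ _ hjoinG _ hΔG =>
      obtain rfl : jB = hP.lift (q1 ≫ j) q2 := hP.hom_ext (by simp [hjB.1]) (by simp [hjB.2])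
      obtain rfl : pP = hP.lift r1 (r2 ≫ h ≫ θ) := hP.hom_ext (by simp [hpP.1]) (by simp [hpP.2])
      obtain rfl : jBG = hPG.lift (q1G ≫ jGp) q2G :=
        hPG.hom_ext (by simp [hjBG.1]) (by simp [hjBG.2])
      obtain rfl : pPG = hPG.lift r1G (r2G ≫ h) :=
        hPG.hom_ext (by simp [hpPG.1]) (by simp [hpPG.2])
      obtain ⟨Θm, hΘmf, hΘmw, hΔm, Tm, jm, ρm, sqm, hm⟩ := ih hprevG
      obtain ⟨hΘf, hΘw⟩ := PreJCat.trivialFib_prodMap hPG hP hG hΘmf hΘmw hθf hθw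
      set Θ := hP.lift (pr1G ≫ Θm) (pr2G ≫ θ)
      refine ⟨Θ, hΘf, hΘw, hP.hom_ext ?_ ?_, ?_⟩
      · simp only [Θ, Category.assoc, IsBinProd.lift_fst, hΔ.1, ← hΔm]
        rw [← Category.assoc, hΔG.1]
      · simp only [Θ, Category.assoc, IsBinProd.lift_snd, hΔ.2]
        rw [← Category.assoc, hΔG.2, Category.id_comp, Category.comp_id]
      obtain ⟨Th, jh, ρh, sqTh, -⟩ := J.pb_exists Θ j' hΘf
      obtain ⟨TBh, jBh, ρB, sqTB, -⟩ := J.pb_exists Θ (hP.lift (q1 ≫ j) q2) hΘf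
      obtain ⟨PEh, pPh, ρPE, sqPE, -⟩ := J.pb_exists Θ (hP.lift r1 (r2 ≫ h ≫ θ)) hΘf
      obtain ⟨Q, jQ, hQ, hQh⟩ := J.exists_isJoin_pullback hjoin hΘf hΘw sqTB sqPE sqTh
      refine ⟨Th, jh, ρh, sqTh, ?_⟩
      obtain ⟨eE, heE, heEp⟩ := PreJCat.exists_weq_lift_of_isPullback
        (x := hPG.lift r1G (r2G ≫ h)) sqPE ((J.pb_weq hΘf sqPE).2 hΘw)
        ((J.pb_weq hΘmf (hPEG.isPullback_lift_comp_fst hPE Θm).flip).2 hΘmw)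
        (hP.hom_ext (by simp [Θ]) (by simp [Θ]))
      obtain ⟨J₂, j₂, hj₂⟩ :=
        PreJCat.exists_isJoin (P := J.toPreJCat) (hPG.lift (q1G ≫ jGp) q2G) pPh
      have hB := PreJCat.weaklyEquivOver_pullback_prodMap hθf hθw hG hΘmf hΘmw sqm hm hP hPG
        hTB hTBG sqTB
      exact hQh.symm.trans ((hB.isJoin hQ hj₂).trans
        (hjoinG.weaklyEquivOver_of_weq_right eE heE heEp hj₂).symm)

lemma weakLifting_iff_of_isFatWedge (hc : ∀ X : C, J.CofModel X) {E G F : C} {h : E ⟶ G}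
    {θ : G ⟶ F} (hθf : J.fib θ) (hθw : J.weq θ) (hG : J.EFibrant G) {m : ℕ}
    {TF PwF TG PwG : C} {jF : TF ⟶ PwF} {ΔF : F ⟶ PwF} {jG : TG ⟶ PwG} {ΔG : G ⟶ PwG}
    (hF : J.IsFatWedge (h ≫ θ) m jF ΔF) (hG' : J.IsFatWedge h m jG ΔG) :
    J.WeakLifting ΔF jF ↔ J.WeakLifting ΔG jG := by
  obtain ⟨Θ, hΘf, hΘw, hΔ, Th, jh, ρ, sq, hjh⟩ :=
    J.exists_isFatWedge_comparison hθf hθw hG hF hG'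
  exact (PreJCat.weakLifting_iff_of_isPullback hc hθf hθw hΘf hΘw sq hΔ).trans
    (hjh.weakLifting_iff hc ΔG)

lemma wsecatE_comp_trivialFib (hc : ∀ X : C, J.CofModel X) {E G F : C} (h : E ⟶ G)
    {θ : G ⟶ F} (hθf : J.fib θ) (hθw : J.weq θ) (hG : J.EFibrant G) (hF : J.EFibrant F) :
    J.WsecatE (h ≫ θ) = J.WsecatE h := by
  have key (m : ℕ) :
      (∃ (T Pw : C) (j : T ⟶ Pw) (Δ : F ⟶ Pw), J.IsFatWedge (h ≫ θ) m j Δ ∧ J.WeakLifting Δ j) ↔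
        ∃ (T Pw : C) (j : T ⟶ Pw) (Δ : G ⟶ Pw), J.IsFatWedge h m j Δ ∧ J.WeakLifting Δ j := by
    obtain ⟨TF, PwF, jF, ΔF, hjF, -⟩ := PreJCat.exists_isFatWedge hF (h ≫ θ) m
    obtain ⟨TG, PwG, jG, ΔG, hjG, -⟩ := PreJCat.exists_isFatWedge hG h m
    constructor
    · rintro ⟨T, Pw, j, Δ, hj, hl⟩
      exact ⟨TG, PwG, jG, ΔG, hjG, (J.weakLifting_iff_of_isFatWedge hc hθf hθw hG hj hjG).1 hl⟩
    · rintro ⟨T, Pw, j, Δ, hj, hl⟩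
      exact ⟨TF, PwF, jF, ΔF, hjF, (J.weakLifting_iff_of_isFatWedge hc hθf hθw hG hjF hj).2 hl⟩
  simp only [PreJCat.WsecatE, key]

end JCat

/-- The definition of `Wsecat` via an F-factorization of the zero
morphism `B ⟶ 0` does not depend on the choice of F-factorization. -/
theorem WsecatE_independent_of_factorization (J : JCat C)
    (hc : ∀ X : C, J.toPreJCat.CofModel X)
    {E B : C} (p : E ⟶ B) {F F' : C} (τ : B ⟶ F) (τ' : B ⟶ F')
    (hτ : J.toPreJCat.weq τ) (hF : J.toPreJCat.EFibrant F)
    (hτ' : J.toPreJCat.weq τ') (hF' : J.toPreJCat.EFibrant F') :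
    J.toPreJCat.WsecatE (p ≫ τ) = J.toPreJCat.WsecatE (p ≫ τ') := by
  obtain ⟨G, w, θ, θ', -, hθf, hθw, hθ'f, hθ'w, hwθ, hwθ', -⟩ :=
    PreJCat.exists_common_refinement hτ hF hτ' hF' (by simp)
  have hG : J.EFibrant G := .of_fib hθf hF
  rw [← hwθ, ← hwθ', ← Category.assoc, ← Category.assoc,
    J.wsecatE_comp_trivialFib hc _ hθf hθw hG hF, J.wsecatE_comp_trivialFib hc _ hθ'f hθ'w hG hF']
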